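/- Consider the PnP model: R° ∈ SO(3), t° ∈ ℝ³, deterministic points (pᵢ)_{i∈ℕ} ⊂ ℝ³ with ‖pᵢ‖ ≤ K and depths dᵢ = e₃ᵀ(R°pᵢ + t°) ≥ δ for constants K, δ > 0, and observations qᵢ' = W E (R°pᵢ + t°)/dᵢ + εᵢ, where the scalar noise coordinates ε_{i,j} (i ∈ ℕ, j ∈ {1,2}) are mutually independent identically distributed real random variables with mean 0, variance σ², and finite fourth moment. Then (1/n)(Aₙᵀ bₙ − Bₙᵀ bₙ) − σ² (1/n) Gₙᵀ 1_{2n} converges in probability to the zero vector in ℝ¹¹ as n → ∞, where 1_{2n} ∈ ℝ^{2n} is the all-ones vector. -/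

import Mathlib

open MeasureTheory ProbabilityTheory Matrix Finset

/-- `W = diag(f_x, f_y)`. -/
def Wmat (fx fy : ℝ) : Matrix (Fin 2) (Fin 2) ℝ := Matrix.diagonal ![fx, fy]

/-- `E = [e₁ e₂]ᵀ ∈ ℝ^{2×3}`, whose rows are the first two standard basis vectors of `ℝ³`. -/
def Emat : Matrix (Fin 2) (Fin 3) ℝ := Matrix.of fun i j => if (i : ℕ) = (j : ℕ) then 1 else 0

/-- Row `2i−1` of `A`: `[−u(pᵢ−p̄)ᵀ, f_x pᵢᵀ, f_x, 0_{1×4}]`. -/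
def rowU (fx u : ℝ) (p pbar : Fin 3 → ℝ) : Fin 11 → ℝ := fun k =>
  if h : (k : ℕ) < 3 then -u * (p ⟨k, h⟩ - pbar ⟨k, h⟩)
  else if h2 : (k : ℕ) < 6 then fx * p ⟨(k : ℕ) - 3, by omega⟩
  else if (k : ℕ) = 6 then fx else 0

/-- Row `2i` of `A`: `[−v(pᵢ−p̄)ᵀ, 0_{1×4}, f_y pᵢᵀ, f_y]`. -/
def rowV (fy v : ℝ) (p pbar : Fin 3 → ℝ) : Fin 11 → ℝ := fun k =>
  if h : (k : ℕ) < 3 then -v * (p ⟨k, h⟩ - pbar ⟨k, h⟩)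
  else if (k : ℕ) < 7 then 0
  else if h2 : (k : ℕ) < 10 then fy * p ⟨(k : ℕ) - 7, by omega⟩ else fy

/-- The pair of rows of `A` (or `B`) associated with a point `p` and observation `q = (u,v)ᵀ`. -/
def Arow (fx fy : ℝ) (q : Fin 2 → ℝ) (p pbar : Fin 3 → ℝ) : Fin 2 → Fin 11 → ℝ :=
  ![rowU fx (q 0) p pbar, rowV fy (q 1) p pbar]

/-- The row `[−(pᵢ−p̄)ᵀ, 0_{1×8}]` of `G` (repeated twice per point). -/
def Grow (p pbar : Fin 3 → ℝ) : Fin 11 → ℝ := fun k =>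
  if h : (k : ℕ) < 3 then -(p ⟨k, h⟩ - pbar ⟨k, h⟩) else 0

/-! Write qᵢ' = qᵢ° + εᵢ. The rows of Aₙ and Bₙ differ only through the observation multiplying
`pᵢ − p̄ₙ`, so coordinate `k` of the vector in question is `(1/n) Σᵢⱼ gₙᵢₖ Zᵢⱼ`, with weights
`gₙᵢₖ = −(pᵢ − p̄ₙ)ₖ` (zero for `k ≥ 3`) bounded by `2K`, and
`Zᵢⱼ = q°ᵢⱼ εᵢⱼ + (εᵢⱼ² − σ²)`. The `Zᵢⱼ` are independent and centered, and their variances are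
uniformly bounded because `q°` is bounded (depths at least `δ`, points in a ball) and the noise has
a finite fourth moment. Chebyshev's inequality bounds the deviation probability of each coordinate
by `O(1/n)`, and a union bound over the eleven coordinates concludes. -/

open Filter Topology

section Chebyshev

variable {Ω : Type*} [MeasurableSpace Ω] {μ : Measure Ω} [IsFiniteMeasure μ]

lemma measureReal_le_abs_sum_le_sum_variance_div_sq {ι : Type*} {s : Finset ι}
    {X : ι → Ω → ℝ} (hL2 : ∀ i ∈ s, MemLp (X i) 2 μ)
    (hind : (s : Set ι).Pairwise fun i j => IndepFun (X i) (X j) μ)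
    (hmean : ∀ i ∈ s, μ[X i] = 0) {c : ℝ} (hc : 0 < c) :
    μ.real {ω | c ≤ |∑ i ∈ s, X i ω|} ≤ (∑ i ∈ s, Var[X i; μ]) / c ^ 2 := by
  have hsum : μ[∑ i ∈ s, X i] = 0 := by
    simp only [Finset.sum_apply]
    rw [integral_finsetSum s fun i hi => (hL2 i hi).integrable one_le_two]
    exact Finset.sum_eq_zero hmean
  have hcheb := meas_ge_le_variance_div_sq (memLp_finsetSum' s hL2) hc
  rw [hsum, IndepFun.variance_sum hL2 hind] at hcheb
  refine ENNReal.toReal_le_of_le_ofReal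
    (div_nonneg (Finset.sum_nonneg fun i _ => variance_nonneg _ _) (sq_nonneg c)) ?_
  simpa using hcheb

theorem tendsto_measureReal_lt_abs_inv_mul_sum_mul {κ : ℕ → Type*} [∀ n, Fintype (κ n)]
    {Z : (n : ℕ) → κ n → Ω → ℝ} {w : (n : ℕ) → κ n → ℝ} {M C c : ℝ}
    (hL2 : ∀ n i, MemLp (Z n i) 2 μ) (hind : ∀ n, Pairwise fun i j => IndepFun (Z n i) (Z n j) μ)
    (hmean : ∀ n i, μ[Z n i] = 0) (hvar : ∀ n i, Var[Z n i; μ] ≤ M)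
    (hw : ∀ n i, |w n i| ≤ C) (hcard : ∀ n, (Fintype.card (κ n) : ℝ) ≤ c * n)
    {η : ℝ} (hη : 0 < η) :
    Tendsto (fun n : ℕ => μ.real {ω | η < |(n : ℝ)⁻¹ * ∑ i, w n i * Z n i ω|}) atTop (𝓝 0) := by
  set M' := max M 0
  have hbound : ∀ n : ℕ, 0 < n →
      μ.real {ω | η < |(n : ℝ)⁻¹ * ∑ i, w n i * Z n i ω|} ≤ c * C ^ 2 * M' / η ^ 2 / n := by
    intro n hn
    have hn' : (0 : ℝ) < n := Nat.cast_pos.2 hn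
    have hvar' : ∀ i, Var[fun ω => w n i * Z n i ω; μ] ≤ C ^ 2 * M' := by
      intro i
      rw [variance_const_mul]
      exact mul_le_mul (sq_le_sq.2 ((hw n i).trans (le_abs_self C)))
        ((hvar n i).trans (le_max_left _ _)) (variance_nonneg _ _) (sq_nonneg C)
    calc μ.real {ω | η < |(n : ℝ)⁻¹ * ∑ i, w n i * Z n i ω|}
        ≤ μ.real {ω | n * η ≤ |∑ i, w n i * Z n i ω|} := by
          refine measureReal_mono fun ω hω => ?_
          simp only [Set.mem_ofPred_eq, abs_mul, abs_inv, Nat.abs_cast] at hω ⊢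
          rw [inv_mul_eq_div, lt_div_iff₀ hn'] at hω
          linarith
      _ ≤ (∑ i, Var[fun ω => w n i * Z n i ω; μ]) / (n * η) ^ 2 :=
          measureReal_le_abs_sum_le_sum_variance_div_sq
            (fun i _ => (hL2 n i).const_mul _)
            (fun i _ j _ hij => (hind n hij).comp (measurable_const_mul _) (measurable_const_mul _))
            (fun i _ => by rw [integral_const_mul, hmean, mul_zero]) (by positivity)
      _ ≤ (c * n) * (C ^ 2 * M') / (n * η) ^ 2 := by
          gcongr
          calc ∑ i, Var[fun ω => w n i * Z n i ω; μ] ≤ Fintype.card (κ n) * (C ^ 2 * M') := by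
                exact (Finset.sum_le_card_nsmul _ _ _ fun i _ => hvar' i).trans_eq
                  (nsmul_eq_mul _ _)
            _ ≤ c * n * (C ^ 2 * M') := by gcongr; exact hcard n
      _ = c * C ^ 2 * M' / η ^ 2 / n := by field_simp
  exact squeeze_zero' (Eventually.of_forall fun n => measureReal_nonneg)
    ((eventually_gt_atTop 0).mono hbound) (tendsto_const_div_atTop_nhds_zero_nat _)

lemma tendsto_measureReal_lt_norm_pi {α ι E : Type*} [Fintype ι] [SeminormedAddCommGroup E]
    {l : Filter α} {Y : α → Ω → ι → E} {η : ℝ} (hη : 0 ≤ η)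
    (h : ∀ k, Tendsto (fun n => μ.real {ω | η < ‖Y n ω k‖}) l (𝓝 0)) :
    Tendsto (fun n => μ.real {ω | η < ‖Y n ω‖}) l (𝓝 0) := by
  have hsub : ∀ n, {ω | η < ‖Y n ω‖} ⊆ ⋃ k, {ω | η < ‖Y n ω k‖} := by
    intro n ω hω
    by_contra hnot
    simp only [Set.mem_iUnion, Set.mem_ofPred_eq, not_exists, not_lt] at hnot
    exact hω.not_ge ((pi_norm_le_iff_of_nonneg hη).2 hnot)
  have hsum := tendsto_finsetSum Finset.univ fun k _ => h k
  rw [Finset.sum_const_zero] at hsum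
  exact squeeze_zero (fun n => measureReal_nonneg)
    (fun n => (measureReal_mono (hsub n)).trans (measureReal_iUnion_fintype_le _)) hsum

end Chebyshev

section Noise

variable {Ω : Type*} [MeasurableSpace Ω] {μ : Measure Ω}

lemma variance_add_le_two_mul [IsFiniteMeasure μ] {X Y : Ω → ℝ} (hX : MemLp X 2 μ)
    (hY : MemLp Y 2 μ) : Var[X + Y; μ] ≤ 2 * Var[X; μ] + 2 * Var[Y; μ] := by
  linarith [variance_add hX hY, variance_sub hX hY, variance_nonneg (X - Y) μ]

variable {e : Ω → ℝ}

lemma memLp_two_sq_of_integrable_pow_four (he : AEStronglyMeasurable e μ)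
    (h4 : Integrable (fun ω => e ω ^ 4) μ) : MemLp (fun ω => e ω ^ 2) 2 μ := by
  have he2 : AEStronglyMeasurable (fun ω => e ω ^ 2) μ := he.pow 2
  exact (memLp_two_iff_integrable_sq he2).2 (by simpa only [← pow_mul] using h4)

lemma memLp_two_of_integrable_pow_four [IsFiniteMeasure μ] (he : AEStronglyMeasurable e μ)
    (h4 : Integrable (fun ω => e ω ^ 4) μ) : MemLp e 2 μ :=
  (memLp_two_iff_integrable_sq he).2
    ((memLp_two_sq_of_integrable_pow_four he h4).integrable one_le_two)

lemma integral_mul_add_sq_sub_eq_zero [IsProbabilityMeasure μ] (he : MemLp e 2 μ)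
    (hmean : μ[e] = 0) {s : ℝ} (hvar : ∫ ω, e ω ^ 2 ∂μ = s) (a : ℝ) :
    ∫ ω, a * e ω + (e ω ^ 2 - s) ∂μ = 0 := by
  have he2 : Integrable (fun ω => e ω ^ 2) μ := he.integrable_sq
  have he2s : Integrable (fun ω => e ω ^ 2 - s) μ := he2.sub (integrable_const s)
  rw [integral_add ((he.integrable one_le_two).const_mul a) he2s, integral_const_mul,
    integral_sub he2 (integrable_const s), hmean, hvar]
  simp

lemma memLp_mul_add_sq_sub [IsFiniteMeasure μ] (he : AEStronglyMeasurable e μ)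
    (h4 : Integrable (fun ω => e ω ^ 4) μ) (a s : ℝ) :
    MemLp (fun ω => a * e ω + (e ω ^ 2 - s)) 2 μ :=
  ((memLp_two_of_integrable_pow_four he h4).const_mul a).add
    ((memLp_two_sq_of_integrable_pow_four he h4).sub (memLp_const s))

lemma variance_mul_add_sq_sub_le [IsProbabilityMeasure μ] (he : AEStronglyMeasurable e μ)
    (h4 : Integrable (fun ω => e ω ^ 4) μ) (a s : ℝ) :
    Var[fun ω => a * e ω + (e ω ^ 2 - s); μ]
      ≤ 2 * a ^ 2 * Var[e; μ] + 2 * Var[fun ω => e ω ^ 2; μ] := by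
  have he2 := memLp_two_sq_of_integrable_pow_four he h4
  have h := variance_add_le_two_mul ((memLp_two_of_integrable_pow_four he h4).const_mul a)
    (he2.sub (memLp_const s))
  rwa [variance_const_mul, show (fun ω => e ω ^ 2) - (fun _ => s) = fun ω => e ω ^ 2 - s from rfl,
    variance_sub_const he2.aestronglyMeasurable, ← mul_assoc] at h

end Noise

lemma norm_inv_smul_sum_range_le {E : Type*} [SeminormedAddCommGroup E] [NormedSpace ℝ E]
    {p : ℕ → E} {K : ℝ} (hp : ∀ i, ‖p i‖ ≤ K) (n : ℕ) :
    ‖(n : ℝ)⁻¹ • ∑ i ∈ Finset.range n, p i‖ ≤ K := by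
  rcases n.eq_zero_or_pos with rfl | hn
  · simpa using (norm_nonneg _).trans (hp 0)
  have hn' : (0 : ℝ) < n := Nat.cast_pos.2 hn
  calc ‖(n : ℝ)⁻¹ • ∑ i ∈ Finset.range n, p i‖
      ≤ (n : ℝ)⁻¹ * ∑ i ∈ Finset.range n, ‖p i‖ := by
        rw [norm_smul, Real.norm_of_nonneg (inv_nonneg.2 hn'.le)]
        gcongr
        exact norm_sum_le _ _
    _ ≤ (n : ℝ)⁻¹ * (n * K) := by
        gcongr
        simpa using Finset.sum_le_card_nsmul (Finset.range n) _ _ fun i _ => hp i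
    _ = K := by field_simp

section Projection

attribute [local instance] Matrix.linftyOpSeminormedAddCommGroup

lemma exists_norm_inv_smul_mulVec_mulVec_add_le {l m n : Type*} [Fintype l] [Fintype m] [Fintype n]
    (P : Matrix l m ℝ) (R : Matrix m n ℝ) (t : m → ℝ) {δ K : ℝ} (hδ : 0 < δ) :
    ∃ C, ∀ (v : n → ℝ) (d : ℝ), ‖v‖ ≤ K → δ ≤ d → ‖d⁻¹ • P *ᵥ (R *ᵥ v + t)‖ ≤ C := by
  refine ⟨δ⁻¹ * (‖P‖ * (‖R‖ * K + ‖t‖)), fun v d hv hd => ?_⟩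
  have hRv : ‖R *ᵥ v + t‖ ≤ ‖R‖ * K + ‖t‖ := by
    grw [norm_add_le, Matrix.linfty_opNorm_mulVec, hv]
  rw [norm_smul, norm_inv, Real.norm_of_nonneg (hδ.trans_le hd).le]
  exact mul_le_mul (inv_anti₀ hδ hd)
    ((Matrix.linfty_opNorm_mulVec P _).trans (mul_le_mul_of_nonneg_left hRv (norm_nonneg P)))
    (norm_nonneg _) (inv_nonneg.2 hδ.le)

end Projection

lemma Arow_add_sub_Arow_mul_sub_mul_Grow (fx fy : ℝ) (q e : Fin 2 → ℝ) (pp pb : Fin 3 → ℝ)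
    (s : ℝ) (j : Fin 2) (k : Fin 11) :
    (Arow fx fy (q + e) pp pb j k - Arow fx fy q pp pb j k) * (q + e) j - s * Grow pp pb k
      = Grow pp pb k * (q j * e j + (e j ^ 2 - s)) := by
  fin_cases j <;>
    simp only [Arow, Fin.zero_eta, Fin.mk_one, Matrix.cons_val_zero, Matrix.cons_val_one,
      Pi.add_apply, rowU, rowV, Grow] <;>
    split_ifs <;> ring

lemma abs_Grow_le (pp pb : Fin 3 → ℝ) (k : Fin 11) : |Grow pp pb k| ≤ ‖pp - pb‖ := by
  unfold Grow
  split_ifs with h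
  · rw [abs_neg, ← Real.norm_eq_abs]
    exact norm_le_pi_norm (pp - pb) ⟨k, h⟩
  · simp

lemma smul_mulVec_sub_sub_smul_apply {κ m : Type*} [Fintype κ] (A B G : Matrix κ m ℝ)
    (b : κ → ℝ) (c s : ℝ) (k : m) :
    (c • (Aᵀ.mulVec b - Bᵀ.mulVec b) - s • (c • Gᵀ.mulVec fun _ => 1)) k
      = c * ∑ i, ((A i k - B i k) * b i - s * G i k) := by
  simp only [Pi.sub_apply, Pi.smul_apply, smul_eq_mul, Matrix.mulVec, dotProduct,
    Matrix.transpose_apply, Finset.sum_sub_distrib, sub_mul, mul_one, ← Finset.mul_sum]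
  ring

theorem Atb_minus_Btb_bias_converges_general
    {Ω : Type*} [MeasurableSpace Ω] (μ : Measure Ω) [IsProbabilityMeasure μ]
    (fx fy : ℝ)
    (R : Matrix (Fin 3) (Fin 3) ℝ)
    (t : Fin 3 → ℝ)
    (p : ℕ → Fin 3 → ℝ) (K δ : ℝ) (hδ : 0 < δ)
    (hpK : ∀ i, ‖p i‖ ≤ K)
    (d : ℕ → ℝ) (hdδ : ∀ i, δ ≤ d i)
    (ε : ℕ → Fin 2 → Ω → ℝ) (σ : ℝ)
    (hindep : iIndepFun (fun ij : ℕ × Fin 2 => ε ij.1 ij.2) μ)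
    (hident : ∀ i j, IdentDistrib (ε i j) (ε 0 0) μ μ)
    (hmom4 : ∀ i j, Integrable (fun ω => (ε i j ω) ^ 4) μ)
    (hmean : ∀ i j, ∫ ω, ε i j ω ∂μ = 0)
    (hvar : ∀ i j, ∫ ω, (ε i j ω) ^ 2 ∂μ = σ ^ 2)
    (qo : ℕ → Fin 2 → ℝ)
    (hqo : ∀ i, qo i = (d i)⁻¹ • (Wmat fx fy * Emat).mulVec (R.mulVec (p i) + t))
    (q : ℕ → Ω → Fin 2 → ℝ)
    (hq : ∀ i ω, q i ω = qo i + fun j => ε i j ω)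
    (pbar : ℕ → Fin 3 → ℝ)
    (hpbar : ∀ n : ℕ, pbar n = (n : ℝ)⁻¹ • ∑ i ∈ Finset.range n, p i)
    (A : (n : ℕ) → Ω → Matrix (Fin n × Fin 2) (Fin 11) ℝ)
    (hA : ∀ (n : ℕ) (ω : Ω) (ij : Fin n × Fin 2),
      A n ω ij = Arow fx fy (q ij.1 ω) (p ij.1) (pbar n) ij.2)
    (B : (n : ℕ) → Matrix (Fin n × Fin 2) (Fin 11) ℝ)
    (hB : ∀ (n : ℕ) (ij : Fin n × Fin 2),
      B n ij = Arow fx fy (qo ij.1) (p ij.1) (pbar n) ij.2)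
    (G : (n : ℕ) → Matrix (Fin n × Fin 2) (Fin 11) ℝ)
    (hG : ∀ (n : ℕ) (ij : Fin n × Fin 2), G n ij = Grow (p ij.1) (pbar n))
    (b : (n : ℕ) → Ω → Fin n × Fin 2 → ℝ)
    (hb : ∀ (n : ℕ) (ω : Ω) (ij : Fin n × Fin 2), b n ω ij = q ij.1 ω ij.2) :
    ∀ η : ℝ, 0 < η →
      Filter.Tendsto
        (fun n : ℕ =>
          (μ {ω | η < ‖(n : ℝ)⁻¹ • ((A n ω)ᵀ.mulVec (b n ω) - (B n)ᵀ.mulVec (b n ω))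
              - σ ^ 2 • ((n : ℝ)⁻¹ • ((G n)ᵀ.mulVec (fun _ => 1)))‖}).toReal)
        Filter.atTop (nhds 0) := by
  intro η hη
  obtain ⟨C, hC⟩ := exists_norm_inv_smul_mulVec_mulVec_add_le (Wmat fx fy * Emat) R t (K := K) hδ
  have hqo_le : ∀ i j, |qo i j| ≤ C := fun i j => by
    rw [← Real.norm_eq_abs]
    exact (norm_le_pi_norm (qo i) j).trans (hqo i ▸ hC _ _ (hpK i) (hdδ i))
  have hεm : ∀ i j, AEStronglyMeasurable (ε i j) μ := fun i j =>
    (hident i j).aemeasurable_fst.aestronglyMeasurable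
  set Z : ℕ × Fin 2 → Ω → ℝ := fun a ω => qo a.1 a.2 * ε a.1 a.2 ω + (ε a.1 a.2 ω ^ 2 - σ ^ 2)
  have hZind : Pairwise fun a b => IndepFun (Z a) (Z b) μ := by
    have hφ : ∀ c : ℝ, Measurable fun x : ℝ => c * x + (x ^ 2 - σ ^ 2) := fun c => by fun_prop
    exact fun a b hab => (hindep.indepFun hab).comp (hφ _) (hφ _)
  have hZvar : ∀ a, Var[Z a; μ] ≤ 2 * C ^ 2 * Var[ε 0 0; μ] + 2 * Var[fun ω => ε 0 0 ω ^ 2; μ] := by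
    rintro ⟨i, j⟩
    have hvar2 : Var[fun ω => ε i j ω ^ 2; μ] = Var[fun ω => ε 0 0 ω ^ 2; μ] :=
      ((hident i j).comp (measurable_id.pow_const 2)).variance_eq
    refine (variance_mul_add_sq_sub_le (hεm i j) (hmom4 i j) _ _).trans ?_
    rw [(hident i j).variance_eq, hvar2]
    gcongr 2 * ?_ * _ + _
    · exact variance_nonneg _ _
    · exact sq_le_sq.2 ((hqo_le i j).trans (le_abs_self C))
  have hY : ∀ (n : ℕ) ω k, ((n : ℝ)⁻¹ • ((A n ω)ᵀ.mulVec (b n ω) - (B n)ᵀ.mulVec (b n ω))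
      - σ ^ 2 • ((n : ℝ)⁻¹ • ((G n)ᵀ.mulVec (fun _ => 1)))) k
      = (n : ℝ)⁻¹ * ∑ ij : Fin n × Fin 2, Grow (p ij.1) (pbar n) k * Z (ij.1, ij.2) ω := by
    intro n ω k
    rw [smul_mulVec_sub_sub_smul_apply]
    congr 1
    refine Finset.sum_congr rfl fun ij _ => ?_
    rw [hA, hB, hG, hb, hq]
    exact Arow_add_sub_Arow_mul_sub_mul_Grow _ _ _ _ _ _ _ _ _
  refine tendsto_measureReal_lt_norm_pi hη.le fun k => ?_
  simp only [Real.norm_eq_abs, hY]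
  exact tendsto_measureReal_lt_abs_inv_mul_sum_mul (c := 2)
    (fun n ij => memLp_mul_add_sq_sub (hεm _ _) (hmom4 _ _) _ _)
    (fun n a b hab => hZind (by simpa [Prod.ext_iff, Fin.ext_iff] using hab))
    (fun n ij => integral_mul_add_sq_sub_eq_zero
      (memLp_two_of_integrable_pow_four (hεm _ _) (hmom4 _ _)) (hmean _ _) (hvar _ _) _)
    (fun n ij => hZvar _)
    (fun n ij => (abs_Grow_le _ _ k).trans ((norm_sub_le _ _).trans
      (add_le_add (hpK _) (hpbar n ▸ norm_inv_smul_sum_range_le hpK n))))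
    (fun n => by simp [mul_comm]) hη

/-- in the PnP model, `(1/n)(Aₙᵀbₙ − Bₙᵀbₙ) − σ²(1/n)Gₙᵀ1_{2n}` converges in
probability to the zero vector of `ℝ¹¹`. Rows of the `2n`-row matrices are indexed by
`Fin n × Fin 2`. -/
theorem Atb_minus_Btb_bias_converges
    {Ω : Type*} [MeasurableSpace Ω] (μ : Measure Ω) [IsProbabilityMeasure μ]
    (fx fy : ℝ) (hfx : 0 < fx) (hfy : 0 < fy)
    (R : Matrix (Fin 3) (Fin 3) ℝ) (hRorth : Rᵀ * R = 1) (hRdet : R.det = 1)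
    (t : Fin 3 → ℝ)
    (p : ℕ → Fin 3 → ℝ) (K δ : ℝ) (hK : 0 < K) (hδ : 0 < δ)
    (hpK : ∀ i, ‖p i‖ ≤ K)
    (d : ℕ → ℝ) (hd : ∀ i, d i = (R.mulVec (p i) + t) 2) (hdδ : ∀ i, δ ≤ d i)
    (ε : ℕ → Fin 2 → Ω → ℝ) (σ : ℝ)
    (hmeas : ∀ i j, Measurable (ε i j))
    (hindep : iIndepFun (fun ij : ℕ × Fin 2 => ε ij.1 ij.2) μ)
    (hident : ∀ i j, IdentDistrib (ε i j) (ε 0 0) μ μ)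
    (hmom4 : ∀ i j, Integrable (fun ω => (ε i j ω) ^ 4) μ)
    (hmean : ∀ i j, ∫ ω, ε i j ω ∂μ = 0)
    (hvar : ∀ i j, ∫ ω, (ε i j ω) ^ 2 ∂μ = σ ^ 2)
    (qo : ℕ → Fin 2 → ℝ)
    (hqo : ∀ i, qo i = (d i)⁻¹ • (Wmat fx fy * Emat).mulVec (R.mulVec (p i) + t))
    (q : ℕ → Ω → Fin 2 → ℝ)
    (hq : ∀ i ω, q i ω = qo i + fun j => ε i j ω)
    (pbar : ℕ → Fin 3 → ℝ)
    (hpbar : ∀ n : ℕ, pbar n = (n : ℝ)⁻¹ • ∑ i ∈ Finset.range n, p i)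
    (A : (n : ℕ) → Ω → Matrix (Fin n × Fin 2) (Fin 11) ℝ)
    (hA : ∀ (n : ℕ) (ω : Ω) (ij : Fin n × Fin 2),
      A n ω ij = Arow fx fy (q ij.1 ω) (p ij.1) (pbar n) ij.2)
    (B : (n : ℕ) → Matrix (Fin n × Fin 2) (Fin 11) ℝ)
    (hB : ∀ (n : ℕ) (ij : Fin n × Fin 2),
      B n ij = Arow fx fy (qo ij.1) (p ij.1) (pbar n) ij.2)
    (G : (n : ℕ) → Matrix (Fin n × Fin 2) (Fin 11) ℝ)
    (hG : ∀ (n : ℕ) (ij : Fin n × Fin 2), G n ij = Grow (p ij.1) (pbar n))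
    (b : (n : ℕ) → Ω → Fin n × Fin 2 → ℝ)
    (hb : ∀ (n : ℕ) (ω : Ω) (ij : Fin n × Fin 2), b n ω ij = q ij.1 ω ij.2) :
    ∀ η : ℝ, 0 < η →
      Filter.Tendsto
        (fun n : ℕ =>
          (μ {ω | η < ‖(n : ℝ)⁻¹ • ((A n ω)ᵀ.mulVec (b n ω) - (B n)ᵀ.mulVec (b n ω))
              - σ ^ 2 • ((n : ℝ)⁻¹ • ((G n)ᵀ.mulVec (fun _ => 1)))‖}).toReal)
        Filter.atTop (nhds 0) :=
  Atb_minus_Btb_bias_converges_general μ fx fy R t p K δ hδ hpK d hdδ ε σ hindep hident hmom4 hmean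
    hvar qo hqo q hq pbar hpbar A hA B hB G hG b hb
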